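/- arXiv:2310.08454 — 2 statements merged into one kernel-verified Lean document; each statement's English description precedes it below -/
import Mathlib

section
/- (Min-max theorem for polymatroid sum) For M-convex sets B_1,…,B_n ⊆ [0,b]_Z with rank functions ρ_i, max over tuples z with z_i ∈ B_i of Σ_{e∈E} min{Σ_i z_i(e), b(e)} equals min over S ⊆ E of (Σ_i ρ_i(E∖S) + b(S)). -/
/-!
Weak duality is immediate. For the converse, take an allocation `z` of maximum covered supply and
draw an arc `e → f` whenever `z i - χ_e + χ_f ∈ B i` for some `i`. No over-covered element reaches
an under-covered one: along a shortest such path all exchanges can be carried out simultaneously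
(a shortest path has no shortcuts), which would raise the covered supply by one. So the set `R` of
elements reaching an under-covered element is covered at most `b` inside and at least `b` outside,
and no arc enters `R`; the latter makes each `z i` maximize `z(R)` over `B i`, i.e. `z i (R) = ρ i R`.
The covered supply of `z` is then `Σ_i ρ_i(R) + b(E ∖ R)`.
-/

open Finset

variable {E : Type*} [Fintype E] [DecidableEq E]

/-- Characteristic (unit) vector of an item. -/
def chi (e : E) : E → ℤ := fun f => if f = e then 1 else 0

/-- The integer box `[0, b]_ℤ`. -/
def Box (b : E → ℤ) : Set (E → ℤ) := {z | ∀ e, 0 ≤ z e ∧ z e ≤ b e}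

/-- M-convex set: exchange property. -/
def MConvex (B : Set (E → ℤ)) : Prop :=
  ∀ x ∈ B, ∀ y ∈ B, ∀ e : E, y e < x e →
    ∃ f : E, x f < y f ∧ x - chi e + chi f ∈ B ∧ y + chi e - chi f ∈ B

/-- `ρ` is the rank function of `B`: `ρ S = max {z(S) : z ∈ B}`. -/
def IsRank (B : Set (E → ℤ)) (ρ : Finset E → ℤ) : Prop :=
  ∀ S : Finset E, IsGreatest ((fun z : E → ℤ => ∑ e ∈ S, z e) '' B) (ρ S)

/-- A set `S` is tight for `z` if `z(S) = ρ S`. -/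
def Tight (ρ : Finset E → ℤ) (z : E → ℤ) (S : Finset E) : Prop :=
  ∑ e ∈ S, z e = ρ S

section MConvex

variable {α : Type*} [DecidableEq α] {B : Set (α → ℤ)}

theorem sum_chi (s : Finset α) (a : α) : ∑ x ∈ s, chi a x = if a ∈ s then 1 else 0 :=
  sum_ite_eq' s a _

theorem sum_natAbs_sub_exchange_lt [Fintype α] {y z : α → ℤ} {f g : α} (hf : z f < y f)
    (hg : y g < z g) :
    ∑ x, ((y - chi f + chi g) x - z x).natAbs < ∑ x, (y x - z x).natAbs := by
  have hfg : f ≠ g := by rintro rfl; omega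
  refine sum_lt_sum (fun x _ => ?_) ⟨f, mem_univ f, ?_⟩
  · simp only [Pi.add_apply, Pi.sub_apply, chi]
    split_ifs <;> subst_vars <;> omega
  · simp [chi, hfg]
    omega

theorem MConvex.sum_le_of_no_exchange_into [Fintype α] (hB : MConvex B) {z : α → ℤ} (hz : z ∈ B)
    {R : Finset α} (hR : ∀ e ∉ R, ∀ f ∈ R, z - chi e + chi f ∉ B) {y : α → ℤ} (hy : y ∈ B) :
    ∑ e ∈ R, y e ≤ ∑ e ∈ R, z e := by
  induction hd : ∑ e, (y e - z e).natAbs using Nat.strong_induction_on generalizing y with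
  | _ n ih =>
    by_contra! hlt
    obtain ⟨f, hfR, hf⟩ := exists_lt_of_sum_lt hlt
    obtain ⟨g, hg, hy', hz'⟩ := hB y hy z hz f hf
    have hgR : g ∈ R := by
      by_contra hgR
      exact hR g hgR f hfR (by rwa [show z - chi g + chi f = z + chi f - chi g by abel])
    have hsame : ∑ e ∈ R, (y - chi f + chi g) e = ∑ e ∈ R, y e := by
      simp [sum_add_distrib, sum_sub_distrib, sum_chi, hfR, hgR]
    have := ih _ (hd ▸ sum_natAbs_sub_exchange_lt hf hg) hy' rfl
    omega

theorem MConvex.exchange_exchange_mem_iff (hB : MConvex B) {x : α → ℤ} {a a' c d : α}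
    (hx : x ∈ B) (ha : x - chi a + chi a' ∈ B) (hshort : x - chi c + chi a' ∉ B)
    (haa' : a ≠ a') (hca : c ≠ a) (hca' : c ≠ a') (hcd : c ≠ d) (hda' : d ≠ a') :
    x - chi a + chi a' - chi c + chi d ∈ B ↔ x - chi c + chi d ∈ B := by
  constructor
  · intro hw
    obtain ⟨f, hf, hf₁, hf₂⟩ := hB _ hw x hx a' (by
      simp [chi, haa'.symm, hca'.symm, hda'.symm])
    obtain rfl | rfl : f = a ∨ f = c := by
      by_contra! h
      simp only [Pi.add_apply, Pi.sub_apply, chi, if_neg h.1, if_neg h.2] at hf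
      split_ifs at hf <;> omega
    · convert hf₁ using 1
      abel
    · exact absurd (by convert hf₂ using 1; abel) hshort
  · intro hu
    obtain ⟨f, hf, hf₁, -⟩ := hB _ ha _ hu c (by
      simp [chi, hca, hca', hcd])
    obtain rfl | rfl : f = d ∨ f = a := by
      by_contra! h
      simp only [Pi.add_apply, Pi.sub_apply, chi, if_neg h.1, if_neg h.2] at hf
      split_ifs at hf <;> omega
    · exact hf₁
    · exact absurd (by convert hf₁ using 1; abel) hshort

theorem MConvex.add_sum_mem_of_shortest (hB : MConvex B) {p : ℕ → α} {J : Finset ℕ} {K : ℕ}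
    {x : α → ℤ} (hx : x ∈ B) (hinj : Set.InjOn p (Set.Iic K))
    (hshort : ∀ t u, t < u → u + 1 ≤ K → x - chi (p t) + chi (p (u + 1)) ∉ B)
    (hJ : ∀ j ∈ J, j < K ∧ x - chi (p j) + chi (p (j + 1)) ∈ B) :
    x + ∑ j ∈ J, (chi (p (j + 1)) - chi (p j)) ∈ B := by
  induction J using Finset.induction_on_max generalizing K x with
  | empty => simpa using hx
  | insert M J hlt ih =>
    -- Exchange along the last arc `M` first: no shortcut `t → M + 1` keeps the earlier arcs
    -- valid and the earlier non-shortcuts invalid.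
    obtain ⟨hMK, hxM⟩ := hJ M (mem_insert_self M J)
    have hne : ∀ i ≤ K, ∀ j ≤ K, i ≠ j → p i ≠ p j := fun i hi j hj => hinj.ne hi hj
    have key : ∀ t < M, ∀ u ≤ M, t ≠ u →
        (x - chi (p M) + chi (p (M + 1)) - chi (p t) + chi (p u) ∈ B ↔
          x - chi (p t) + chi (p u) ∈ B) := fun t ht u hu htu =>
      hB.exchange_exchange_mem_iff hx hxM (hshort t M ht hMK) (hne _ (by omega) _ hMK (by omega))
        (hne _ (by omega) _ (by omega) (by omega)) (hne _ (by omega) _ hMK (by omega))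
        (hne _ (by omega) _ (by omega) htu) (hne _ (by omega) _ hMK (by omega))
    have := ih hxM (hinj.mono (Set.Iic_subset_Iic.2 hMK.le))
      (fun t u htu hu h => hshort t u htu (by omega) ((key t (by omega) (u + 1) hu (by omega)).1 h))
      (fun j hj => ⟨hlt j hj, (key j (hlt j hj) (j + 1) (hlt j hj) (by omega)).2
        (hJ j (mem_insert_of_mem hj)).2⟩)
    rw [sum_insert fun h => (hlt M h).false]
    convert this using 1
    abel

end MConvex

section Reach

variable {β : Type*} (r : β → β → Prop) (T : β → Prop)

def ReachWithin : ℕ → β → Prop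
  | 0, a => T a
  | k + 1, a => T a ∨ ∃ b, r a b ∧ ReachWithin k b

def IsDist (k : ℕ) (a : β) : Prop :=
  ReachWithin r T k a ∧ ∀ j < k, ¬ ReachWithin r T j a

variable {r T}

theorem ReachWithin.exists_isDist {k : ℕ} {a : β} (h : ReachWithin r T k a) :
    ∃ m, IsDist r T m a := by
  classical
  have hex : ∃ m, ReachWithin r T m a := ⟨k, h⟩
  exact ⟨Nat.find hex, Nat.find_spec hex, fun j hj => Nat.find_min hex hj⟩

theorem IsDist.exists_rel {k : ℕ} {a : β} (h : IsDist r T (k + 1) a) :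
    ∃ b, r a b ∧ IsDist r T k b := by
  obtain ⟨hT | ⟨b, hab, hb⟩, hmin⟩ := h
  · exact absurd hT (hmin 0 k.succ_pos)
  · exact ⟨b, hab, hb, fun j hj hbj => hmin (j + 1) (by omega) (Or.inr ⟨b, hab, hbj⟩)⟩

theorem IsDist.exists_path {k : ℕ} {a : β} (h : IsDist r T k a) :
    ∃ p : ℕ → β, p 0 = a ∧ (∀ j < k, r (p j) (p (j + 1))) ∧
      ∀ t ≤ k, IsDist r T (k - t) (p t) := by
  induction k generalizing a with
  | zero => exact ⟨fun _ => a, rfl, by simp, fun t ht => by simpa [Nat.le_zero.1 ht] using h⟩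
  | succ k ih =>
    obtain ⟨b, hab, hb⟩ := h.exists_rel
    obtain ⟨q, rfl, hq, hqd⟩ := ih hb
    refine ⟨fun | 0 => a | t + 1 => q t, rfl, ?_, ?_⟩
    · rintro (_ | j) hj
      · exact hab
      · exact hq j (by omega)
    · rintro (_ | t) ht
      · exact h
      · simpa using hqd t (by omega)

theorem IsDist.exists_shortest_path {k : ℕ} {a : β} (h : IsDist r T k a) :
    ∃ p : ℕ → β, p 0 = a ∧ T (p k) ∧ (∀ j < k, r (p j) (p (j + 1))) ∧
      Set.InjOn p (Set.Iic k) ∧ ∀ t u, t < u → u + 1 ≤ k → ¬ r (p t) (p (u + 1)) := by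
  obtain ⟨p, hp0, hstep, hdist⟩ := h.exists_path
  have hle : ∀ s ≤ k, ∀ t ≤ k, p s = p t → t ≤ s := fun s hs t ht hst => by
    by_contra! hst'
    exact (hdist s hs).2 (k - t) (by omega) (hst ▸ (hdist t ht).1)
  refine ⟨p, hp0, by simpa [ReachWithin] using (hdist k le_rfl).1, hstep,
    fun s hs t ht hst => le_antisymm (hle t ht s hs hst.symm) (hle s hs t ht hst), ?_⟩
  intro t u htu hu hr
  have hreach : ReachWithin r T (k - (u + 1) + 1) (p t) := Or.inr ⟨_, hr, (hdist (u + 1) hu).1⟩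
  exact (hdist t (by omega)).2 _ (by omega) hreach

end Reach

section PolymatroidSum

variable {N : Type*} [Fintype N] {B : N → Set (E → ℤ)} {b : E → ℤ} {z : N → E → ℤ}

def ExchangeArc (B : N → Set (E → ℤ)) (z : N → E → ℤ) (e f : E) : Prop :=
  ∃ i, z i - chi e + chi f ∈ B i

theorem sum_min_le_sum_rank_add {ρ : N → Finset E → ℤ} (hρ : ∀ i, IsRank (B i) (ρ i))
    (hz : ∀ i, z i ∈ B i) (S : Finset E) :
    ∑ e, min (∑ i, z i e) (b e) ≤ ∑ i, ρ i Sᶜ + ∑ e ∈ S, b e := by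
  rw [← sum_compl_add_sum S]
  refine add_le_add ?_ (sum_le_sum fun e _ => min_le_right _ _)
  calc ∑ e ∈ Sᶜ, min (∑ i, z i e) (b e) ≤ ∑ e ∈ Sᶜ, ∑ i, z i e :=
        sum_le_sum fun e _ => min_le_left _ _
    _ = ∑ i, ∑ e ∈ Sᶜ, z i e := sum_comm
    _ ≤ ∑ i, ρ i Sᶜ := sum_le_sum fun i _ => (hρ i Sᶜ).2 ⟨z i, hz i, rfl⟩

theorem sum_min_add_chi_sub_chi {x : E → ℤ} {a c : E} (ha : x a < b a) (hc : b c < x c) :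
    ∑ e, min (x e + chi a e - chi c e) (b e) = ∑ e, min (x e) (b e) + 1 := by
  have hpt : ∀ e, min (x e + chi a e - chi c e) (b e) = min (x e) (b e) + chi a e := by
    intro e
    simp only [chi]
    split_ifs <;> subst_vars <;> omega
  rw [sum_congr rfl fun e _ => hpt e, sum_add_distrib, sum_chi, if_pos (mem_univ a)]

theorem exists_sum_min_gt_of_shortest_path (hM : ∀ i, MConvex (B i)) (hz : ∀ i, z i ∈ B i)
    {p : ℕ → E} {k : ℕ} (hover : b (p 0) < ∑ i, z i (p 0)) (hdef : ∑ i, z i (p k) < b (p k))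
    (hstep : ∀ j < k, ExchangeArc B z (p j) (p (j + 1))) (hinj : Set.InjOn p (Set.Iic k))
    (hshort : ∀ t u, t < u → u + 1 ≤ k → ¬ ExchangeArc B z (p t) (p (u + 1))) :
    ∃ z' : N → E → ℤ, (∀ i, z' i ∈ B i) ∧
      ∑ e, min (∑ i, z i e) (b e) < ∑ e, min (∑ i, z' i e) (b e) := by
  classical
  obtain rfl | hk := Nat.eq_zero_or_pos k
  · omega
  have : Nonempty N := let ⟨i, _⟩ := hstep 0 hk; ⟨i⟩
  choose! lab hlab using hstep
  set z' : N → E → ℤ :=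
    fun i => z i + ∑ j ∈ (range k).filter (lab · = i), (chi (p (j + 1)) - chi (p j))
  have hz' : ∀ i, z' i ∈ B i := fun i =>
    (hM i).add_sum_mem_of_shortest (hz i) hinj (fun t u htu hu h => hshort t u htu hu ⟨i, h⟩)
      fun j hj => by
        obtain ⟨hjk, rfl⟩ := mem_filter.1 hj
        exact ⟨mem_range.1 hjk, hlab j (mem_range.1 hjk)⟩
  have hcover : ∀ e, ∑ i, z' i e = ∑ i, z i e + chi (p k) e - chi (p 0) e := fun e => by
    simp only [z', Pi.add_apply, Finset.sum_apply, Pi.sub_apply, sum_add_distrib]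
    rw [sum_fiberwise (range k) lab fun j => chi (p (j + 1)) e - chi (p j) e,
      sum_range_sub fun j => chi (p j) e]
    ring
  refine ⟨z', hz', ?_⟩
  simp only [hcover, sum_min_add_chi_sub_chi (x := fun e => ∑ i, z i e) hdef hover]
  omega

theorem exists_sum_min_gt_of_reachWithin (hM : ∀ i, MConvex (B i)) (hz : ∀ i, z i ∈ B i)
    {e₀ : E} {k : ℕ} (hover : b e₀ < ∑ i, z i e₀)
    (hreach : ReachWithin (ExchangeArc B z) (fun e => ∑ i, z i e < b e) k e₀) :
    ∃ z' : N → E → ℤ, (∀ i, z' i ∈ B i) ∧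
      ∑ e, min (∑ i, z i e) (b e) < ∑ e, min (∑ i, z' i e) (b e) := by
  obtain ⟨m, hm⟩ := hreach.exists_isDist
  obtain ⟨p, rfl, hdef, hstep, hinj, hshort⟩ := hm.exists_shortest_path
  exact exists_sum_min_gt_of_shortest_path hM hz hover hdef hstep hinj hshort

theorem exists_sum_min_eq_of_forall_reachWithin {ρ : N → Finset E → ℤ} (hM : ∀ i, MConvex (B i))
    (hρ : ∀ i, IsRank (B i) (ρ i)) (hz : ∀ i, z i ∈ B i)
    (hreach : ∀ k e, ReachWithin (ExchangeArc B z) (fun e => ∑ i, z i e < b e) k e →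
      ∑ i, z i e ≤ b e) :
    ∃ S : Finset E, ∑ e, min (∑ i, z i e) (b e) = ∑ i, ρ i Sᶜ + ∑ e ∈ S, b e := by
  classical
  set R := univ.filter fun e => ∃ k, ReachWithin (ExchangeArc B z) (fun e => ∑ i, z i e < b e) k e
  have hin : ∀ e ∈ R, ∑ i, z i e ≤ b e := fun e he =>
    let ⟨k, hk⟩ := (mem_filter.1 he).2; hreach k e hk
  have hout : ∀ e ∉ R, b e ≤ ∑ i, z i e := fun e he => by
    by_contra! h
    exact he (mem_filter.2 ⟨mem_univ e, 0, h⟩)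
  have hclosed : ∀ i, ∀ e ∉ R, ∀ f ∈ R, z i - chi e + chi f ∉ B i := by
    intro i e he f hf hmem
    obtain ⟨k, hk⟩ := (mem_filter.1 hf).2
    exact he (mem_filter.2 ⟨mem_univ e, k + 1, Or.inr ⟨f, ⟨i, hmem⟩, hk⟩⟩)
  have htight : ∀ i, ∑ e ∈ R, z i e = ρ i R := fun i => by
    obtain ⟨y, hy, hyR⟩ := (hρ i R).1
    exact le_antisymm ((hρ i R).2 ⟨z i, hz i, rfl⟩)
      (hyR ▸ (hM i).sum_le_of_no_exchange_into (hz i) (hclosed i) hy)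
  refine ⟨Rᶜ, ?_⟩
  calc ∑ e, min (∑ i, z i e) (b e)
      = ∑ e ∈ R, min (∑ i, z i e) (b e) + ∑ e ∈ Rᶜ, min (∑ i, z i e) (b e) :=
        (sum_add_sum_compl R _).symm
    _ = ∑ e ∈ R, ∑ i, z i e + ∑ e ∈ Rᶜ, b e := by
        congr 1
        · exact sum_congr rfl fun e he => min_eq_left (hin e he)
        · exact sum_congr rfl fun e he => min_eq_right (hout e (mem_compl.1 he))
    _ = ∑ i, ρ i Rᶜᶜ + ∑ e ∈ Rᶜ, b e := by
        rw [compl_compl, sum_comm, sum_congr rfl fun i _ => htight i]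

end PolymatroidSum

theorem stmt4_general {N : Type*} [Fintype N] (b : E → ℤ) (B : N → Set (E → ℤ))
    (hM : ∀ i, MConvex (B i))
    (ρ : N → Finset E → ℤ) (hρ : ∀ i, IsRank (B i) (ρ i)) :
    ∃ v : ℤ,
      IsGreatest {t : ℤ | ∃ z : N → E → ℤ, (∀ i, z i ∈ B i) ∧
        t = ∑ e : E, min (∑ i, z i e) (b e)} v ∧
      IsLeast {t : ℤ | ∃ S : Finset E, t = ∑ i, ρ i Sᶜ + ∑ e ∈ S, b e} v := by
  have hne : ∀ i, (B i).Nonempty := fun i =>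
    let ⟨w, hw, _⟩ := (hρ i ∅).1; ⟨w, hw⟩
  choose z₀ hz₀ using hne
  obtain ⟨_, ⟨z, hz, rfl⟩, hmax⟩ := Int.exists_greatest_of_bdd
    (P := fun t => ∃ z : N → E → ℤ, (∀ i, z i ∈ B i) ∧ t = ∑ e : E, min (∑ i, z i e) (b e))
    ⟨_, fun t ⟨z, hz, ht⟩ => ht ▸ sum_min_le_sum_rank_add hρ hz ∅⟩ ⟨_, z₀, hz₀, rfl⟩
  have hopt : ∀ k e, ReachWithin (ExchangeArc B z) (fun e => ∑ i, z i e < b e) k e →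
      ∑ i, z i e ≤ b e := fun k e hk => by
    by_contra! hover
    obtain ⟨z', hz', hlt⟩ := exists_sum_min_gt_of_reachWithin hM hz hover hk
    exact (hmax _ ⟨z', hz', rfl⟩).not_gt hlt
  obtain ⟨S, hS⟩ := exists_sum_min_eq_of_forall_reachWithin hM hρ hz hopt
  refine ⟨_, ⟨⟨z, hz, rfl⟩, fun t ht => hmax t ht⟩, ⟨S, hS⟩, ?_⟩
  rintro t ⟨S', rfl⟩
  exact sum_min_le_sum_rank_add hρ hz S'

/-- Min-max theorem for polymatroid sum: the maximum covered supply over feasible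
allocations equals the minimum of `Σ_i ρ_i(E∖S) + b(S)` over sets `S`. -/
theorem stmt4 {N : Type*} [Fintype N] (b : E → ℤ) (B : N → Set (E → ℤ))
    (hBox : ∀ i, B i ⊆ Box b) (hM : ∀ i, MConvex (B i))
    (ρ : N → Finset E → ℤ) (hρ : ∀ i, IsRank (B i) (ρ i)) :
    ∃ v : ℤ,
      IsGreatest {t : ℤ | ∃ z : N → E → ℤ, (∀ i, z i ∈ B i) ∧
        t = ∑ e : E, min (∑ i, z i e) (b e)} v ∧
      IsLeast {t : ℤ | ∃ S : Finset E, t = ∑ i, ρ i Sᶜ + ∑ e ∈ S, b e} v :=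
  stmt4_general b B hM ρ hρ
end

section
/- In a market with strong gross substitutes valuations, a price vector p is Walrasian if and only if it is both packing and covering; in particular, if there is a packing allocation and a covering allocation at prices p, then there is a single allocation that is simultaneously packing and covering. -/
open Finset

variable {E : Type*} [Fintype E] [DecidableEq E]

/-- Quasi-linear utility of a bundle at prices `p`. -/
noncomputable def util (v : (E → ℤ) → ℤ) (p : E → ℝ) (z : E → ℤ) : ℝ :=
  (v z : ℝ) - ∑ e : E, p e * (z e : ℝ)

/-- Demand set: utility-maximizing bundles in the box. -/
def Demand (b : E → ℤ) (v : (E → ℤ) → ℤ) (p : E → ℝ) : Set (E → ℤ) :=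
  {z | z ∈ Box b ∧ ∀ y ∈ Box b, util v p y ≤ util v p z}

/-- Componentwise minimal preferred bundles. -/
def MinDemand (b : E → ℤ) (v : (E → ℤ) → ℤ) (p : E → ℝ) : Set (E → ℤ) :=
  {z | z ∈ Demand b v p ∧ ∀ y ∈ Demand b v p, y ≤ z → y = z}

/-- Componentwise maximal preferred bundles. -/
def MaxDemand (b : E → ℤ) (v : (E → ℤ) → ℤ) (p : E → ℝ) : Set (E → ℤ) :=
  {z | z ∈ Demand b v p ∧ ∀ y ∈ Demand b v p, z ≤ y → y = z}

/-- M♮-concavity, equivalent to the strong gross substitutes property. -/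
def MNatConcave (b : E → ℤ) (v : (E → ℤ) → ℤ) : Prop :=
  ∀ x ∈ Box b, ∀ y ∈ Box b, ∀ e : E, y e < x e →
    v x + v y ≤ v (x - chi e) + v (y + chi e) ∨
    ∃ f : E, x f < y f ∧ v x + v y ≤ v (x - chi e + chi f) + v (y + chi e - chi f)

/-- Prices `p` are packing: a choice of preferred bundles oversells no item. -/
def Packing {N : Type*} [Fintype N] (b : E → ℤ) (v : N → (E → ℤ) → ℤ) (p : E → ℝ) : Prop :=
  ∃ z : N → E → ℤ, (∀ i, z i ∈ Demand b (v i) p) ∧ ∀ e, ∑ i, z i e ≤ b e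

/-- Prices `p` are covering: a choice of preferred bundles sells all items. -/
def Covering {N : Type*} [Fintype N] (b : E → ℤ) (v : N → (E → ℤ) → ℤ) (p : E → ℝ) : Prop :=
  ∃ z : N → E → ℤ, (∀ i, z i ∈ Demand b (v i) p) ∧ ∀ e, b e ≤ ∑ i, z i e

/-- Prices `p` are Walrasian: a choice of preferred bundles exactly exhausts the supply. -/
def Walrasian {N : Type*} [Fintype N] (b : E → ℤ) (v : N → (E → ℤ) → ℤ) (p : E → ℝ) : Prop :=
  ∃ z : N → E → ℤ, (∀ i, z i ∈ Demand b (v i) p) ∧ ∀ e, ∑ i, z i e = b e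

/-!
Among the packing allocations choose `y` closest in `ℓ¹` to a covering allocation `z`. If `y`
undersells an item `e`, some buyer has `y i e < z i e`. The exchange axiom of the M♮-concave `v i`,
applied to the preferred bundles `z i` and `y i`, shows that `y i + χ_e` or `y i + χ_e - χ_f` (for
some `f` with `z i f < y i f`) is again a preferred bundle; substituting it for `y i` gives a packing
allocation closer to `z`.
-/

def l1Dist (x y : E → ℤ) : ℕ := ∑ e, (x e - y e).natAbs

lemma mem_box_of_between {ι : Type*} {b x y w : ι → ℤ} (hx : x ∈ Box b) (hy : y ∈ Box b)
    (hw : ∀ g, min (x g) (y g) ≤ w g ∧ w g ≤ max (x g) (y g)) : w ∈ Box b := by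
  intro g
  have := hx g; have := hy g; have := hw g
  omega

lemma mem_demand_of_exchange {ι : Type*} [Fintype ι] {b : ι → ℤ} {v : (ι → ℤ) → ℤ} {p : ι → ℝ}
    {x y x' y' : ι → ℤ} (hx : x ∈ Demand b v p) (hy : y ∈ Demand b v p) (hx' : x' ∈ Box b)
    (hy' : y' ∈ Box b) (hsum : x' + y' = x + y) (hv : v x + v y ≤ v x' + v y') :
    y' ∈ Demand b v p := by
  refine ⟨hy', fun w hw => (hy.2 w hw).trans ?_⟩
  have hcost : ∑ e, p e * (x' e : ℝ) + ∑ e, p e * (y' e : ℝ) =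
      ∑ e, p e * (x e : ℝ) + ∑ e, p e * (y e : ℝ) := by
    simp only [← sum_add_distrib, ← mul_add, ← Int.cast_add, ← Pi.add_apply, hsum]
  have hv' : (v x : ℝ) + v y ≤ v x' + v y' := by exact_mod_cast hv
  have hx'x := hx.2 x' hx'
  unfold util at *
  linarith

theorem MNatConcave.exists_demand_step {b : E → ℤ} {v : (E → ℤ) → ℤ} {p : E → ℝ}
    (hv : MNatConcave b v) {x y : E → ℤ} (hx : x ∈ Demand b v p) (hy : y ∈ Demand b v p)
    {e : E} (he : y e < x e) :
    ∃ y' ∈ Demand b v p, y' e = y e + 1 ∧ (∀ g ≠ e, y' g ≤ y g) ∧ l1Dist x y' < l1Dist x y := by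
  -- both alternatives of the exchange axiom move `χ_e` from `x` to `y` and `d` back,
  -- with `d = 0` or `d = χ_f`
  obtain ⟨d, hd, hvd⟩ : ∃ d : E → ℤ, (∀ g, d g = 0 ∨ (g ≠ e ∧ d g = 1 ∧ x g < y g)) ∧
      v x + v y ≤ v (x - chi e + d) + v (y + chi e - d) := by
    rcases hv x hx.1 y hy.1 e he with h | ⟨f, hf, h⟩
    · exact ⟨0, fun g => Or.inl rfl, by simpa using h⟩
    · refine ⟨chi f, fun g => ?_, h⟩
      by_cases hg : g = f
      · subst hg
        exact Or.inr ⟨by rintro rfl; omega, by simp [chi], hf⟩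
      · simp [chi, hg]
  have hcoord : ∀ g, (chi e g = 1 ∧ d g = 0 ∧ y g < x g) ∨
      (chi e g = 0 ∧ (d g = 0 ∨ d g = 1 ∧ x g < y g)) := by
    intro g
    by_cases hg : g = e
    · subst hg
      exact Or.inl ⟨if_pos rfl, (hd g).resolve_right fun h => h.1 rfl, he⟩
    · exact Or.inr ⟨if_neg hg, (hd g).imp_right And.right⟩
  have hchi : chi e e = 1 := if_pos rfl
  have hbetween : ∀ g, min (x g) (y g) ≤ (x - chi e + d) g ∧ (x - chi e + d) g ≤ max (x g) (y g)
      ∧ min (x g) (y g) ≤ (y + chi e - d) g ∧ (y + chi e - d) g ≤ max (x g) (y g)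
      ∧ (x g - (y + chi e - d) g).natAbs ≤ (x g - y g).natAbs := by
    intro g
    simp only [Pi.add_apply, Pi.sub_apply]
    rcases hcoord g with h | h <;> omega
  refine ⟨y + chi e - d, mem_demand_of_exchange hx hy
    (mem_box_of_between hx.1 hy.1 fun g => ⟨(hbetween g).1, (hbetween g).2.1⟩)
    (mem_box_of_between hx.1 hy.1 fun g => ⟨(hbetween g).2.2.1, (hbetween g).2.2.2.1⟩)
    (by abel) hvd, ?_, fun g hg => ?_, ?_⟩
  · simp only [Pi.add_apply, Pi.sub_apply]
    have := hcoord e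
    omega
  · simp only [Pi.add_apply, Pi.sub_apply, chi, if_neg hg]
    have := hd g
    omega
  · refine Finset.sum_lt_sum (fun g _ => (hbetween g).2.2.2.2) ⟨e, mem_univ e, ?_⟩
    simp only [Pi.add_apply, Pi.sub_apply]
    have := hcoord e
    omega

lemma sum_update_eq_sub_add {ι M : Type*} [Fintype ι] [DecidableEq ι] [AddCommGroup M]
    (f : ι → M) (i : ι) (a : M) : ∑ j, Function.update f i a j = ∑ j, f j - f i + a := by
  rw [sum_update_of_mem (mem_univ i), ← add_sum_erase _ _ (mem_univ i), sdiff_singleton_eq_erase]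
  abel

theorem exists_packing_closer {N : Type*} [Fintype N] [DecidableEq N] {b : E → ℤ}
    {v : N → (E → ℤ) → ℤ} {p : E → ℝ} (hv : ∀ i, MNatConcave b (v i)) {y z : N → E → ℤ}
    (hy : ∀ i, y i ∈ Demand b (v i) p) (hyb : ∀ g, ∑ i, y i g ≤ b g)
    (hz : ∀ i, z i ∈ Demand b (v i) p) {e : E} (hyz : ∑ i, y i e < ∑ i, z i e)
    (hye : ∑ i, y i e < b e) :
    ∃ y' : N → E → ℤ, (∀ i, y' i ∈ Demand b (v i) p) ∧ (∀ g, ∑ i, y' i g ≤ b g) ∧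
      ∑ i, l1Dist (z i) (y' i) < ∑ i, l1Dist (z i) (y i) := by
  obtain ⟨i, -, hi⟩ := exists_lt_of_sum_lt hyz
  obtain ⟨w, hw, hwe, hwg, hdist⟩ := (hv i).exists_demand_step (hz i) (hy i) hi
  refine ⟨Function.update y i w, fun j => ?_, fun g => ?_, ?_⟩
  · rcases eq_or_ne j i with rfl | hj
    · simpa using hw
    · simpa [hj] using hy j
  · have hsum := congrFun (sum_update_eq_sub_add y i w) g
    simp only [Finset.sum_apply, Pi.add_apply, Pi.sub_apply] at hsum
    rw [hsum]
    rcases eq_or_ne g e with rfl | hg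
    · omega
    · linarith [hwg g hg, hyb g]
  · refine Finset.sum_lt_sum (fun j _ => ?_) ⟨i, mem_univ i, by simpa using hdist⟩
    rcases eq_or_ne j i with rfl | hj
    · simpa using hdist.le
    · simp [hj]

theorem stmt14_general {N : Type*} [Fintype N] (b : E → ℤ)
    (v : N → (E → ℤ) → ℤ) (hsgs : ∀ i, MNatConcave b (v i))
    (p : E → ℝ) :
    Walrasian b v p ↔ Packing b v p ∧ Covering b v p := by
  refine ⟨fun ⟨z, hz, hzb⟩ => ⟨⟨z, hz, fun e => (hzb e).le⟩, ⟨z, hz, fun e => (hzb e).ge⟩⟩, ?_⟩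
  rintro ⟨⟨y₀, hy₀, hy₀b⟩, z, hz, hzb⟩
  classical
  obtain ⟨y, ⟨hy, hyb⟩, hmin⟩ := (measure fun y : N → E → ℤ => ∑ i, l1Dist (z i) (y i)).wf.has_min
    {y | (∀ i, y i ∈ Demand b (v i) p) ∧ ∀ e, ∑ i, y i e ≤ b e} ⟨y₀, hy₀, hy₀b⟩
  refine ⟨y, hy, fun e => (hyb e).antisymm ?_⟩
  by_contra! he
  obtain ⟨y', hy', hy'b, hcloser⟩ := exists_packing_closer hsgs hy hyb hz (he.trans_le (hzb e)) he
  exact hmin y' ⟨hy', hy'b⟩ hcloser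

/-- In a market with strong gross substitutes valuations, prices are Walrasian
iff they are both packing and covering. -/
theorem stmt14 {N : Type*} [Fintype N] (b : E → ℤ) (hb : 0 ≤ b)
    (v : N → (E → ℤ) → ℤ) (hsgs : ∀ i, MNatConcave b (v i))
    (hmono : ∀ i, ∀ x ∈ Box b, ∀ y ∈ Box b, x ≤ y → v i x ≤ v i y)
    (p : E → ℝ) (hp : 0 ≤ p) :
    Walrasian b v p ↔ Packing b v p ∧ Covering b v p :=
  stmt14_general b v hsgs p
end
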